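/- arXiv:math/0604282 — 2 statements merged into one kernel-verified Lean document; each statement's English description precedes it below -/
import Mathlib

section
/- For every fixed p ∈ (-π,π)³, the function q ↦ u(p,q) on (-π,π)³ attains its minimum uniquely at the point q₀ = p/2. -/
open Real

noncomputable def eps (p : Fin 3 → ℝ) : ℝ := 3 - Real.cos (p 0) - Real.cos (p 1) - Real.cos (p 2)

noncomputable def uu (p q : Fin 3 → ℝ) : ℝ := eps p + eps (p - q) + eps q

def cube : Set (Fin 3 → ℝ) := Set.univ.pi fun _ => Set.Ioo (-Real.pi) Real.pi

lemma key_le (a b : ℝ) (ha : -π < a) (ha' : a < π) (hb : -π < b) (hb' : b < π) :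
    Real.cos (a - b) + Real.cos b ≤ 2 * Real.cos (a/2) := by
  have h := Real.cos_add_cos (a - b) b
  have h1 : (a - b + b) / 2 = a / 2 := by ring
  have h2 : (a - b - b) / 2 = a / 2 - b := by ring
  rw [h1, h2] at h
  rw [h]
  have hpos : 0 < Real.cos (a / 2) := by
    apply Real.cos_pos_of_mem_Ioo
    constructor <;> [linarith; linarith]
  nlinarith [Real.cos_le_one (a / 2 - b), hpos]

lemma key_lt (a b : ℝ) (ha : -π < a) (ha' : a < π) (hb : -π < b) (hb' : b < π)
    (hne : b ≠ a / 2) :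
    Real.cos (a - b) + Real.cos b < 2 * Real.cos (a/2) := by
  have h := Real.cos_add_cos (a - b) b
  have h1 : (a - b + b) / 2 = a / 2 := by ring
  have h2 : (a - b - b) / 2 = a / 2 - b := by ring
  rw [h1, h2] at h
  rw [h]
  have hpos : 0 < Real.cos (a / 2) := by
    apply Real.cos_pos_of_mem_Ioo
    constructor <;> [linarith; linarith]
  have hπ := Real.pi_pos
  -- cos (a/2 - b) < 1
  have hlt : Real.cos (a / 2 - b) < 1 := by
    have h2t : Real.cos (a / 2 - b) = 1 - 2 * Real.sin ((a / 2 - b) / 2) ^ 2 := by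
      have h3 : a / 2 - b = 2 * ((a / 2 - b) / 2) := by ring
      rw [h3, Real.cos_two_mul, ← Real.sin_sq_add_cos_sq ((a / 2 - b) / 2)]
      ring
    have hs : Real.sin ((a / 2 - b) / 2) ≠ 0 := by
      rw [ne_eq, Real.sin_eq_zero_iff_of_lt_of_lt (by linarith) (by linarith)]
      intro h0
      apply hne; linarith
    have : 0 < Real.sin ((a / 2 - b) / 2) ^ 2 := by positivity
    linarith
  nlinarith [hpos, hlt]

/-- For every `p ∈ (-π,π)³`, the map `q ↦ u(p,q)` attains its minimum on `(-π,π)³`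
uniquely at `q₀ = p/2`. -/
theorem stmt1 (p : Fin 3 → ℝ) (hp : p ∈ cube) :
    (fun i => p i / 2) ∈ cube ∧
    ∀ q ∈ cube, q ≠ (fun i => p i / 2) → uu p (fun i => p i / 2) < uu p q := by
  have hπ := Real.pi_pos
  have hp' : ∀ i, -π < p i ∧ p i < π := by
    intro i; exact hp i (Set.mem_univ i)
  constructor
  · intro i _
    exact ⟨by linarith [(hp' i).1], by linarith [(hp' i).2]⟩
  · intro q hq hne
    have hq' : ∀ i, -π < q i ∧ q i < π := by
      intro i; exact hq i (Set.mem_univ i)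
    obtain ⟨j, hj⟩ := Function.ne_iff.mp hne
    have weak : ∀ i : Fin 3, Real.cos (p i - q i) + Real.cos (q i) ≤ 2 * Real.cos (p i / 2) :=
      fun i => key_le _ _ (hp' i).1 (hp' i).2 (hq' i).1 (hq' i).2
    have strict : Real.cos (p j - q j) + Real.cos (q j) < 2 * Real.cos (p j / 2) :=
      key_lt _ _ (hp' j).1 (hp' j).2 (hq' j).1 (hq' j).2 hj
    have hc : ∀ i : Fin 3, Real.cos (p i - p i / 2) = Real.cos (p i / 2) := by
      intro i; congr 1; ring
    simp only [uu, eps, Pi.sub_apply]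
    rw [hc 0, hc 1, hc 2]
    have hj3 : j = 0 ∨ j = 1 ∨ j = 2 := by omega
    rcases hj3 with h | h | h <;> subst h <;>
      linarith [weak 0, weak 1, weak 2, strict]
end

section
/- If z < m(p) and Δ_μ(p,z) = 0, then f(q) = φ(q)/(u(p,q) − z) is a nonzero element of L²(𝕋³) satisfying h_μ(p)f = z·f, and every eigenfunction of h_μ(p) with eigenvalue z is a scalar multiple of f (the eigenvalue is simple). -/
/-!
Since `u(p,·) - z ≥ m(p) - z > 0` on `𝕋³` and `φ` is bounded there, `f = φ/(u(p,·) - z)` is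
bounded, hence in `L²`. The condition `Δ_μ(p,z) = 0` says exactly `μ ∫ φ f = 1`, which gives both
`f ≠ 0` and `h_μ(p) f = z f`. Conversely, an eigenvector `g` satisfies
`(u(p,q) - z) g(q) = μ φ(q) ∫ φ g`, so `g = (μ ∫ φ g) f`.
-/

open Real MeasureTheory

/-- The torus `𝕋³`, identified with the cube `(-π, π]³`. -/
def T3 : Set (Fin 3 → ℝ) := Set.univ.pi fun _ => Set.Ioc (-Real.pi) Real.pi

/-- `m(p) = min_{q ∈ 𝕋³} u(p,q)`, the bottom of the essential spectrum. -/
noncomputable def mfun (p : Fin 3 → ℝ) : ℝ := sInf (uu p '' T3)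

/-- The Fredholm determinant `Δ_μ(p,z) = 1 - μ ∫_{𝕋³} φ(t)²/(u(p,t) - z) dt`. -/
noncomputable def Δ (μ : ℝ) (φ : (Fin 3 → ℝ) → ℝ) (p : Fin 3 → ℝ) (z : ℝ) : ℝ :=
  1 - μ * ∫ t in T3, φ t ^ 2 / (uu p t - z)

lemma eps_nonneg (p : Fin 3 → ℝ) : 0 ≤ eps p := by
  have := Real.cos_le_one (p 0); have := Real.cos_le_one (p 1); have := Real.cos_le_one (p 2)
  unfold eps; linarith

lemma uu_nonneg (p q : Fin 3 → ℝ) : 0 ≤ uu p q :=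
  add_nonneg (add_nonneg (eps_nonneg p) (eps_nonneg (p - q))) (eps_nonneg q)

lemma continuous_uu (p : Fin 3 → ℝ) : Continuous (uu p) := by
  unfold uu eps
  fun_prop

lemma mfun_le_uu (p : Fin 3 → ℝ) {q : Fin 3 → ℝ} (hq : q ∈ T3) : mfun p ≤ uu p q :=
  csInf_le ⟨0, by rintro x ⟨t, -, rfl⟩; exact uu_nonneg p t⟩ ⟨q, hq, rfl⟩

lemma measurableSet_T3 : MeasurableSet T3 :=
  MeasurableSet.univ_pi fun _ => measurableSet_Ioc

instance : IsFiniteMeasure (volume.restrict T3) := by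
  refine ⟨?_⟩
  rw [Measure.restrict_apply_univ, T3, volume_pi_pi]
  simp [Real.volume_Ioc]

lemma exists_abs_le_on_T3 {φ : (Fin 3 → ℝ) → ℝ} (hφ : Continuous φ) :
    ∃ M, ∀ q ∈ T3, |φ q| ≤ M := by
  have hT3 : T3 ⊆ Set.univ.pi fun _ => Set.Icc (-π) π :=
    Set.pi_mono fun _ _ => Set.Ioc_subset_Icc_self
  obtain ⟨M, hM⟩ := (isCompact_univ_pi fun _ => isCompact_Icc).exists_bound_of_continuousOn
    hφ.continuousOn
  exact ⟨M, fun q hq => hM q (hT3 hq)⟩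

lemma mfun_sub_le_uu_sub {p : Fin 3 → ℝ} {z : ℝ} {q : Fin 3 → ℝ} (hq : q ∈ T3) :
    mfun p - z ≤ uu p q - z :=
  sub_le_sub_right (mfun_le_uu p hq) z

lemma uu_sub_pos {p : Fin 3 → ℝ} {z : ℝ} (hz : z < mfun p) {q : Fin 3 → ℝ} (hq : q ∈ T3) :
    0 < uu p q - z :=
  (sub_pos.mpr hz).trans_le (mfun_sub_le_uu_sub hq)

lemma memLp_div_uu_sub {φ : (Fin 3 → ℝ) → ℝ} (hφ : Continuous φ) {p : Fin 3 → ℝ} {z : ℝ}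
    (hz : z < mfun p) (r : ENNReal) :
    MemLp (fun q => φ q / (uu p q - z)) r (volume.restrict T3) := by
  obtain ⟨M, hM⟩ := exists_abs_le_on_T3 hφ
  have hδ : 0 < mfun p - z := sub_pos.mpr hz
  have hmeas : Measurable fun q => φ q / (uu p q - z) :=
    hφ.measurable.div ((continuous_uu p).measurable.sub measurable_const)
  refine MemLp.of_bound hmeas.aestronglyMeasurable (M / (mfun p - z)) ?_
  filter_upwards [ae_restrict_mem measurableSet_T3] with q hq
  rw [Real.norm_eq_abs, abs_div, abs_of_pos (uu_sub_pos hz hq)]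
  calc |φ q| / (uu p q - z) ≤ |φ q| / (mfun p - z) :=
        div_le_div_of_nonneg_left (abs_nonneg _) hδ (mfun_sub_le_uu_sub hq)
    _ ≤ M / (mfun p - z) := div_le_div_of_nonneg_right (hM q hq) hδ.le

lemma mul_integral_eq_one_of_Δ_eq_zero {μ : ℝ} {φ : (Fin 3 → ℝ) → ℝ} {p : Fin 3 → ℝ} {z : ℝ}
    (hΔ : Δ μ φ p z = 0) : μ * ∫ t in T3, φ t * (φ t / (uu p t - z)) = 1 := by
  simp only [mul_div_assoc', ← sq]
  unfold Δ at hΔ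
  linarith

lemma not_ae_eq_zero_of_mul_integral_eq_one {ν : Measure (Fin 3 → ℝ)} {μ : ℝ}
    {φ f : (Fin 3 → ℝ) → ℝ} (h : μ * ∫ t, φ t * f t ∂ν = 1) : ¬ ∀ᵐ q ∂ν, f q = 0 := by
  intro hf
  have : ∫ t, φ t * f t ∂ν = 0 := integral_eq_zero_of_ae (by filter_upwards [hf] with t ht; simp [ht])
  simp [this] at h

lemma eigen_eq_div_uu_sub {p q : Fin 3 → ℝ} {z μ c : ℝ} {φ g : (Fin 3 → ℝ) → ℝ}
    (hq : uu p q - z ≠ 0) (hg : uu p q * g q - μ * φ q * c = z * g q) :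
    g q = μ * c * (φ q / (uu p q - z)) := by
  field_simp
  linarith

theorem stmt9_general (φ : (Fin 3 → ℝ) → ℝ) (hφ : Continuous φ)
    (μ : ℝ) (p : Fin 3 → ℝ)
    (z : ℝ) (hz : z < mfun p) (hΔ : Δ μ φ p z = 0) :
    MemLp (fun q => φ q / (uu p q - z)) 2 (volume.restrict T3) ∧
    ¬ (∀ᵐ q ∂(volume.restrict T3), φ q / (uu p q - z) = 0) ∧
    (∀ q ∈ T3,
      uu p q * (φ q / (uu p q - z)) - μ * φ q * (∫ t in T3, φ t * (φ t / (uu p t - z)))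
        = z * (φ q / (uu p q - z))) ∧
    (∀ g : (Fin 3 → ℝ) → ℝ, MemLp g 2 (volume.restrict T3) →
      (∀ᵐ q ∂(volume.restrict T3),
        uu p q * g q - μ * φ q * ∫ t in T3, φ t * g t = z * g q) →
      ∃ c : ℝ, ∀ᵐ q ∂(volume.restrict T3), g q = c * (φ q / (uu p q - z))) := by
  have hI := mul_integral_eq_one_of_Δ_eq_zero hΔ
  refine ⟨memLp_div_uu_sub hφ hz 2, not_ae_eq_zero_of_mul_integral_eq_one hI, ?_, ?_⟩
  · intro q hq
    have hd := (uu_sub_pos hz hq).ne'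
    rw [mul_right_comm, hI, one_mul]
    field_simp
    ring
  · intro g _ hg
    refine ⟨μ * ∫ t in T3, φ t * g t, ?_⟩
    filter_upwards [hg, ae_restrict_mem measurableSet_T3] with q hq hqT
    exact eigen_eq_div_uu_sub (uu_sub_pos hz hqT).ne' hq

/-- If `z < m(p)` and `Δ_μ(p,z) = 0`, then `f(q) = φ(q)/(u(p,q) - z)` is a nonzero
element of `L²(𝕋³)` satisfying `h_μ(p) f = z f`, and the eigenvalue `z` is simple:
every eigenfunction is an (a.e.) scalar multiple of `f`. -/
theorem stmt9 (φ : (Fin 3 → ℝ) → ℝ) (hφ : Continuous φ)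
    (μ : ℝ) (hμ : 0 < μ) (p : Fin 3 → ℝ) (hp : p ∈ T3)
    (z : ℝ) (hz : z < mfun p) (hΔ : Δ μ φ p z = 0) :
    MemLp (fun q => φ q / (uu p q - z)) 2 (volume.restrict T3) ∧
    ¬ (∀ᵐ q ∂(volume.restrict T3), φ q / (uu p q - z) = 0) ∧
    (∀ q ∈ T3,
      uu p q * (φ q / (uu p q - z)) - μ * φ q * (∫ t in T3, φ t * (φ t / (uu p t - z)))
        = z * (φ q / (uu p q - z))) ∧
    (∀ g : (Fin 3 → ℝ) → ℝ, MemLp g 2 (volume.restrict T3) →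
      (∀ᵐ q ∂(volume.restrict T3),
        uu p q * g q - μ * φ q * ∫ t in T3, φ t * g t = z * g q) →
      ∃ c : ℝ, ∀ᵐ q ∂(volume.restrict T3), g q = c * (φ q / (uu p q - z))) :=
  stmt9_general φ hφ μ p z hz hΔ
end
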